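/- arXiv:2003.04493 — 5 statements merged into one kernel-verified Lean document; each statement's English description precedes it below -/
import Mathlib

section
/- Let f = T(P,Q) be the trade-off function of two probability measures P, Q having densities p, q with respect to a dominating σ-finite measure μ. For ε ∈ ℝ, define δ₁(ε) = 1 + f*(−e^ε), where f*(y) = sup_{0 ≤ x ≤ 1} (yx − f(x)) is the convex conjugate. Then δ₁(ε) = ∫ (q − e^ε p)₊ dμ, the integral of the positive part of q − e^ε p. -/
open MeasureTheory
open scoped ENNReal NNReal

noncomputable def tradeOff {Ω : Type*} [MeasurableSpace Ω]
    (P Q : Measure Ω) (α : ℝ) : ℝ :=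
  sInf {β | ∃ φ : Ω → ℝ, Measurable φ ∧ (∀ x, φ x ∈ Set.Icc (0:ℝ) 1) ∧
    (∫ x, φ x ∂P) ≤ α ∧ β = 1 - ∫ x, φ x ∂Q}

/-- Convex conjugate of a function, restricted to [0,1]. -/
noncomputable def conj01 (f : ℝ → ℝ) (y : ℝ) : ℝ :=
  sSup {z | ∃ x ∈ Set.Icc (0:ℝ) 1, z = y * x - f x}

lemma wd_integral {Ω : Type*} [MeasurableSpace Ω] (μ : Measure Ω)
    (p φ : Ω → ℝ) (hp : Measurable p) (hp0 : ∀ x, 0 ≤ p x) :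
    ∫ x, φ x ∂(μ.withDensity fun x => ENNReal.ofReal (p x))
      = ∫ x, φ x * p x ∂μ := by
  have h1 : (fun x => ENNReal.ofReal (p x)) = fun x => ((p x).toNNReal : ℝ≥0∞) := rfl
  rw [h1, integral_withDensity_eq_integral_smul hp.real_toNNReal]
  congr 1; ext x
  simp [NNReal.smul_def, Real.coe_toNNReal _ (hp0 x), mul_comm]

lemma wd_facts {Ω : Type*} [MeasurableSpace Ω] (μ : Measure Ω)
    (p : Ω → ℝ) (hp : Measurable p) (hp0 : ∀ x, 0 ≤ p x)
    (P : Measure Ω) [IsProbabilityMeasure P]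
    (hP : P = μ.withDensity (fun x => ENNReal.ofReal (p x))) :
    Integrable p μ ∧ ∫ x, p x ∂μ = 1 := by
  have hl : ∫⁻ x, ENNReal.ofReal (p x) ∂μ = 1 := by
    have := measure_univ (μ := P)
    rwa [hP, withDensity_apply _ MeasurableSet.univ, setLIntegral_univ] at this
  have hint : Integrable p μ := by
    refine ⟨hp.aestronglyMeasurable, ?_⟩
    rw [hasFiniteIntegral_iff_ofReal (ae_of_all _ hp0), hl]
    exact ENNReal.one_lt_top
  refine ⟨hint, ?_⟩
  rw [integral_eq_lintegral_of_nonneg_ae (ae_of_all _ hp0) hp.aestronglyMeasurable, hl]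
  simp

theorem primal_to_dual_delta {Ω : Type*} [MeasurableSpace Ω]
    (μ : Measure Ω) [SigmaFinite μ] (p q : Ω → ℝ)
    (hp : Measurable p) (hq : Measurable q)
    (hp0 : ∀ x, 0 ≤ p x) (hq0 : ∀ x, 0 ≤ q x)
    (P Q : Measure Ω) [IsProbabilityMeasure P] [IsProbabilityMeasure Q]
    (hP : P = μ.withDensity (fun x => ENNReal.ofReal (p x)))
    (hQ : Q = μ.withDensity (fun x => ENNReal.ofReal (q x)))
    (ε : ℝ) :
    1 + conj01 (tradeOff P Q) (-Real.exp ε)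
      = ∫ x, max (q x - Real.exp ε * p x) 0 ∂μ := by
  set E := Real.exp ε with hEdef
  have hE : 0 < E := Real.exp_pos ε
  obtain ⟨hpi, hpint⟩ := wd_facts μ p hp hp0 P hP
  obtain ⟨hqi, hqint⟩ := wd_facts μ q hq hq0 Q hQ
  set g : Ω → ℝ := fun x => q x - E * p x with hgdef
  set I : ℝ := ∫ x, max (g x) 0 ∂μ with hIdef
  -- integrability of max g 0
  have hgplusi : Integrable (fun x => max (g x) 0) μ := by
    refine hqi.mono' ((hq.sub (measurable_const.mul hp)).max measurable_const).aestronglyMeasurable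
      (ae_of_all _ fun x => ?_)
    rw [Real.norm_eq_abs, abs_of_nonneg (le_max_right _ _)]
    refine max_le ?_ (hq0 x)
    have := mul_nonneg hE.le (hp0 x)
    simp only [hgdef]; linarith
  -- generic facts about a test φ
  have test_facts : ∀ φ : Ω → ℝ, Measurable φ → (∀ x, φ x ∈ Set.Icc (0:ℝ) 1) →
      Integrable (fun x => φ x * p x) μ ∧ Integrable (fun x => φ x * q x) μ ∧
      (∫ x, φ x ∂P = ∫ x, φ x * p x ∂μ) ∧ (∫ x, φ x ∂Q = ∫ x, φ x * q x ∂μ) ∧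
      (0 ≤ ∫ x, φ x ∂P) ∧ (∫ x, φ x ∂P ≤ 1) ∧ (∫ x, φ x ∂Q ≤ 1) ∧
      (∫ x, φ x * q x ∂μ - E * ∫ x, φ x * p x ∂μ ≤ I) := by
    intro φ hφ hφ01
    have hb : ∀ (r : Ω → ℝ), (∀ x, 0 ≤ r x) → Integrable r μ →
        Integrable (fun x => φ x * r x) μ := by
      intro r hr0 hri
      refine hri.mono' (hφ.aestronglyMeasurable.mul hri.aestronglyMeasurable) (ae_of_all _ fun x => ?_)
      rw [Real.norm_eq_abs, abs_of_nonneg (mul_nonneg (hφ01 x).1 (hr0 x))]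
      calc φ x * r x ≤ 1 * r x := mul_le_mul_of_nonneg_right (hφ01 x).2 (hr0 x)
        _ = r x := one_mul _
    have hip : Integrable (fun x => φ x * p x) μ := hb p hp0 hpi
    have hiq : Integrable (fun x => φ x * q x) μ := hb q hq0 hqi
    have heP : ∫ x, φ x ∂P = ∫ x, φ x * p x ∂μ := by rw [hP]; exact wd_integral μ p φ hp hp0
    have heQ : ∫ x, φ x ∂Q = ∫ x, φ x * q x ∂μ := by rw [hQ]; exact wd_integral μ q φ hq hq0
    have hP0 : 0 ≤ ∫ x, φ x ∂P := by
      rw [heP]; exact integral_nonneg fun x => mul_nonneg (hφ01 x).1 (hp0 x)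
    have hP1 : ∫ x, φ x ∂P ≤ 1 := by
      rw [heP, ← hpint]
      exact integral_mono hip hpi fun x => by
        calc φ x * p x ≤ 1 * p x := mul_le_mul_of_nonneg_right (hφ01 x).2 (hp0 x)
          _ = p x := one_mul _
    have hQ1 : ∫ x, φ x ∂Q ≤ 1 := by
      rw [heQ, ← hqint]
      exact integral_mono hiq hqi fun x => by
        calc φ x * q x ≤ 1 * q x := mul_le_mul_of_nonneg_right (hφ01 x).2 (hq0 x)
          _ = q x := one_mul _
    have hkey : ∫ x, φ x * q x ∂μ - E * ∫ x, φ x * p x ∂μ ≤ I := by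
      have hsub : ∫ x, φ x * q x ∂μ - E * ∫ x, φ x * p x ∂μ = ∫ x, φ x * g x ∂μ := by
        rw [← integral_const_mul, ← integral_sub hiq (hip.const_mul E)]
        congr 1; ext x; simp only [hgdef]; ring
      rw [hsub, hIdef]
      refine integral_mono (by
        have : (fun x => φ x * g x) = fun x => φ x * q x - E * (φ x * p x) := by
          ext x; simp only [hgdef]; ring
        rw [this]; exact hiq.sub (hip.const_mul E)) hgplusi fun x => ?_
      rcases le_or_gt (g x) 0 with h | h
      · calc φ x * g x ≤ 0 := mul_nonpos_of_nonneg_of_nonpos (hφ01 x).1 h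
          _ ≤ max (g x) 0 := le_max_right _ _
      · calc φ x * g x ≤ 1 * g x := mul_le_mul_of_nonneg_right (hφ01 x).2 h.le
          _ = g x := one_mul _
          _ ≤ max (g x) 0 := le_max_left _ _
    exact ⟨hip, hiq, heP, heQ, hP0, hP1, hQ1, hkey⟩
  -- nonnegativity of tradeOff and bounds of the sInf sets
  set f := tradeOff P Q with hfdef
  have hBset : ∀ α : ℝ, {β | ∃ φ : Ω → ℝ, Measurable φ ∧ (∀ x, φ x ∈ Set.Icc (0:ℝ) 1) ∧
      (∫ x, φ x ∂P) ≤ α ∧ β = 1 - ∫ x, φ x ∂Q} = {β | ∃ φ : Ω → ℝ, Measurable φ ∧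
      (∀ x, φ x ∈ Set.Icc (0:ℝ) 1) ∧ (∫ x, φ x ∂P) ≤ α ∧ β = 1 - ∫ x, φ x ∂Q} :=
    fun _ => rfl
  have hBnonneg : ∀ α : ℝ, ∀ β ∈ {β | ∃ φ : Ω → ℝ, Measurable φ ∧
      (∀ x, φ x ∈ Set.Icc (0:ℝ) 1) ∧ (∫ x, φ x ∂P) ≤ α ∧ β = 1 - ∫ x, φ x ∂Q}, (0:ℝ) ≤ β := by
    rintro α β ⟨φ, hφ, hφ01, _, rfl⟩
    have := (test_facts φ hφ hφ01).2.2.2.2.2.2.1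
    linarith
  have hf_nonneg : ∀ α : ℝ, 0 ≤ f α := fun α => Real.sInf_nonneg (hBnonneg α)
  have hBmem : ∀ α : ℝ, 0 ≤ α → (1:ℝ) ∈ {β | ∃ φ : Ω → ℝ, Measurable φ ∧
      (∀ x, φ x ∈ Set.Icc (0:ℝ) 1) ∧ (∫ x, φ x ∂P) ≤ α ∧ β = 1 - ∫ x, φ x ∂Q} := by
    intro α hα
    exact ⟨fun _ => 0, measurable_const, fun x => ⟨le_refl 0, zero_le_one⟩, by simpa, by simp⟩
  -- the optimal test
  set s : Set Ω := {x | 0 < g x} with hsdef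
  have hs : MeasurableSet s := measurableSet_lt measurable_const (hq.sub (measurable_const.mul hp))
  set φ₀ : Ω → ℝ := s.indicator (fun _ => 1) with hφ₀def
  have hφ₀m : Measurable φ₀ := measurable_const.indicator hs
  have hφ₀01 : ∀ x, φ₀ x ∈ Set.Icc (0:ℝ) 1 := fun x => by
    by_cases hx : x ∈ s <;> simp [hφ₀def, hx]
  obtain ⟨hip₀, hiq₀, heP₀, heQ₀, hP0₀, hP1₀, hQ1₀, _⟩ := test_facts φ₀ hφ₀m hφ₀01
  have hopt : ∫ x, φ₀ x * q x ∂μ - E * ∫ x, φ₀ x * p x ∂μ = I := by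
    have hsub : ∫ x, φ₀ x * q x ∂μ - E * ∫ x, φ₀ x * p x ∂μ = ∫ x, φ₀ x * g x ∂μ := by
      rw [← integral_const_mul, ← integral_sub hiq₀ (hip₀.const_mul E)]
      congr 1; ext x; simp only [hgdef]; ring
    rw [hsub, hIdef]
    congr 1; ext x
    by_cases hx : x ∈ s
    · have : 0 < g x := hx
      simp [hφ₀def, hx, max_eq_left this.le]
    · have : ¬ (0 < g x) := hx
      simp [hφ₀def, hx, max_eq_right (not_lt.mp this)]
  -- now the sSup set
  have hA : conj01 f (-E) = sSup {z | ∃ x ∈ Set.Icc (0:ℝ) 1, z = (-E) * x - f x} := rfl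
  set A : Set ℝ := {z | ∃ x ∈ Set.Icc (0:ℝ) 1, z = (-E) * x - f x} with hAdef
  have hAne : A.Nonempty := ⟨(-E) * 0 - f 0, 0, ⟨le_refl 0, zero_le_one⟩, rfl⟩
  have hAbdd : BddAbove A := by
    refine ⟨0, ?_⟩
    rintro z ⟨x, ⟨hx0, _⟩, rfl⟩
    have h1 : (-E) * x ≤ 0 := mul_nonpos_of_nonpos_of_nonneg (neg_nonpos.mpr hE.le) hx0
    have h2 := hf_nonneg x
    linarith
  -- upper bound: sSup A ≤ I - 1
  have hub : sSup A ≤ I - 1 := by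
    refine csSup_le hAne ?_
    rintro z ⟨α, ⟨hα0, _⟩, rfl⟩
    have hfα : 1 - E * α - I ≤ f α := by
      refine le_csInf ⟨1, hBmem α hα0⟩ ?_
      rintro β ⟨φ, hφ, hφ01, hφα, rfl⟩
      obtain ⟨hip, hiq, heP, heQ, hP0, hP1, hQ1, hkey⟩ := test_facts φ hφ hφ01
      have h1 : ∫ x, φ x * p x ∂μ ≤ α := heP ▸ hφα
      have h2 : E * ∫ x, φ x * p x ∂μ ≤ E * α := mul_le_mul_of_nonneg_left h1 hE.le
      rw [heQ]
      linarith
    linarith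
  -- lower bound: I - 1 ≤ sSup A
  have hlb : I - 1 ≤ sSup A := by
    set x₀ : ℝ := ∫ x, φ₀ x ∂P with hx₀def
    have hx₀mem : x₀ ∈ Set.Icc (0:ℝ) 1 := ⟨hP0₀, hP1₀⟩
    have hmem : (-E) * x₀ - f x₀ ∈ A := ⟨x₀, hx₀mem, rfl⟩
    have hfle : f x₀ ≤ 1 - ∫ x, φ₀ x ∂Q := by
      refine csInf_le ⟨0, hBnonneg x₀⟩ ⟨φ₀, hφ₀m, hφ₀01, le_refl _, rfl⟩
    have h1 : I - 1 ≤ (-E) * x₀ - f x₀ := by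
      have e1 : x₀ = ∫ x, φ₀ x * p x ∂μ := heP₀
      have e2 : E * x₀ = E * ∫ x, φ₀ x * p x ∂μ := by rw [e1]
      rw [heQ₀] at hfle
      linarith [hopt, hfle, e2]
    exact h1.trans (le_csSup hAbdd hmem)
  have : sSup A = I - 1 := le_antisymm hub hlb
  rw [hA, this]
  ring
end

section
/- Let f = T(P,Q) with densities p, q with respect to a dominating measure. Then for any ε ≥ 0 and δ ∈ [0,1], the following are equivalent: (i) f(x) ≥ 1 − δ − e^ε x for all x ∈ [0,1]; (ii) Q(E) ≤ e^ε P(E) + δ for every measurable event E. -/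
open MeasureTheory

lemma integral_wd_aux {Ω : Type*} [MeasurableSpace Ω] (μ : Measure Ω) (p : Ω → ℝ)
    (hp : Measurable p) (hp0 : ∀ x, 0 ≤ p x) (φ : Ω → ℝ) :
    ∫ x, φ x ∂(μ.withDensity fun x => ENNReal.ofReal (p x)) = ∫ x, p x * φ x ∂μ := by
  have := integral_withDensity_eq_integral_smul (μ := μ) hp.real_toNNReal φ
  simp only [ENNReal.ofReal] at *
  rw [this]
  congr 1; funext x
  rw [NNReal.smul_def, Real.coe_toNNReal _ (hp0 x), smul_eq_mul]

lemma meas_wd_aux {Ω : Type*} [MeasurableSpace Ω] (μ : Measure Ω) (p : Ω → ℝ)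
    (hp : Measurable p) (hp0 : ∀ x, 0 ≤ p x) {E : Set Ω} (hE : MeasurableSet E) :
    ((μ.withDensity fun x => ENNReal.ofReal (p x)) E).toReal = ∫ x in E, p x ∂μ := by
  rw [withDensity_apply _ hE,
    integral_eq_lintegral_of_nonneg_ae (ae_of_all _ fun x => hp0 x)
      (hp.aestronglyMeasurable.restrict)]

lemma integrable_bdd_aux {Ω : Type*} [MeasurableSpace Ω] (P : Measure Ω)
    [IsFiniteMeasure P] (φ : Ω → ℝ) (hφ : Measurable φ)
    (hφ01 : ∀ x, φ x ∈ Set.Icc (0:ℝ) 1) : Integrable φ P := by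
  refine Integrable.mono' (integrable_const 1) hφ.aestronglyMeasurable
    (ae_of_all _ fun x => ?_)
  rw [Real.norm_eq_abs, abs_le]
  exact ⟨by linarith [(hφ01 x).1], (hφ01 x).2⟩

lemma integrable_dens_aux {Ω : Type*} [MeasurableSpace Ω] (μ : Measure Ω)
    (p : Ω → ℝ) (hp : Measurable p) (hp0 : ∀ x, 0 ≤ p x)
    (P : Measure Ω) [IsProbabilityMeasure P]
    (hP : P = μ.withDensity (fun x => ENNReal.ofReal (p x))) :
    Integrable p μ := by
  have hfin : ∫⁻ a, ENNReal.ofReal (p a) ∂μ = 1 := by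
    have h1 := measure_univ (μ := P)
    rwa [hP, withDensity_apply _ MeasurableSet.univ, Measure.restrict_univ] at h1
  refine ⟨hp.aestronglyMeasurable, ?_⟩
  rw [hasFiniteIntegral_iff_ofReal (ae_of_all _ hp0), hfin]
  exact ENNReal.one_lt_top

theorem fdp_iff_dp {Ω : Type*} [MeasurableSpace Ω]
    (μ : Measure Ω) [SigmaFinite μ] (p q : Ω → ℝ)
    (hp : Measurable p) (hq : Measurable q)
    (hp0 : ∀ x, 0 ≤ p x) (hq0 : ∀ x, 0 ≤ q x)
    (P Q : Measure Ω) [IsProbabilityMeasure P] [IsProbabilityMeasure Q]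
    (hP : P = μ.withDensity (fun x => ENNReal.ofReal (p x)))
    (hQ : Q = μ.withDensity (fun x => ENNReal.ofReal (q x)))
    (ε δ : ℝ) (hε : 0 ≤ ε) (hδ : δ ∈ Set.Icc (0:ℝ) 1) :
    (∀ x ∈ Set.Icc (0:ℝ) 1, 1 - δ - Real.exp ε * x ≤ tradeOff P Q x) ↔
    (∀ E : Set Ω, MeasurableSet E →
      (Q E).toReal ≤ Real.exp ε * (P E).toReal + δ) := by
  have hQle1 : ∀ φ : Ω → ℝ, Measurable φ → (∀ x, φ x ∈ Set.Icc (0:ℝ) 1) →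
      ∫ x, φ x ∂Q ≤ 1 := by
    intro φ hφ h01
    calc ∫ x, φ x ∂Q ≤ ∫ _, (1:ℝ) ∂Q :=
          integral_mono (integrable_bdd_aux Q φ hφ h01) (integrable_const 1)
            (fun x => (h01 x).2)
      _ = 1 := by simp
  have hbdd : ∀ α : ℝ, BddBelow {β | ∃ φ : Ω → ℝ, Measurable φ ∧
      (∀ x, φ x ∈ Set.Icc (0:ℝ) 1) ∧ (∫ x, φ x ∂P) ≤ α ∧ β = 1 - ∫ x, φ x ∂Q} := by
    intro α
    refine ⟨0, fun β hβ => ?_⟩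
    obtain ⟨φ, hφ, h01, _, rfl⟩ := hβ
    linarith [hQle1 φ hφ h01]
  constructor
  · -- (i) → (ii)
    intro h E hE
    set φ : Ω → ℝ := E.indicator (fun _ => 1) with hφdef
    have hφm : Measurable φ := measurable_const.indicator hE
    have hφ01 : ∀ x, φ x ∈ Set.Icc (0:ℝ) 1 := fun x => by
      by_cases hx : x ∈ E <;> simp [hφdef, hx]
    have hPint : ∫ x, φ x ∂P = (P E).toReal := integral_indicator_one hE
    have hQint : ∫ x, φ x ∂Q = (Q E).toReal := integral_indicator_one hE
    have hmem : (P E).toReal ∈ Set.Icc (0:ℝ) 1 := by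
      constructor
      · exact ENNReal.toReal_nonneg
      · exact ENNReal.toReal_le_of_le_ofReal one_pos.le (by simpa using prob_le_one)
    have h1 := h _ hmem
    have h2 : tradeOff P Q (P E).toReal ≤ 1 - (Q E).toReal := by
      apply csInf_le (hbdd _)
      exact ⟨φ, hφm, hφ01, hPint.le, hQint ▸ rfl⟩
    linarith [h1.trans h2]
  · -- (ii) → (i)
    intro h x hx
    apply le_csInf
    · exact ⟨1 - ∫ _, x ∂Q, fun _ => x, measurable_const, fun _ => hx, by simp, rfl⟩
    · rintro β ⟨φ, hφm, hφ01, hPφ, rfl⟩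
      set E : Set Ω := {ω | Real.exp ε * p ω < q ω} with hEdef
      have hE : MeasurableSet E := measurableSet_lt (hp.const_mul _) hq
      have hpintμ : Integrable p μ := integrable_dens_aux μ p hp hp0 P hP
      have hqintμ : Integrable q μ := integrable_dens_aux μ q hq hq0 Q hQ
      have habs : ∀ (r : Ω → ℝ), (∀ x, 0 ≤ r x) → ∀ ω, ‖r ω * φ ω‖ ≤ r ω := by
        intro r hr0 ω
        rw [Real.norm_eq_abs, abs_mul, abs_of_nonneg (hr0 ω),
          abs_of_nonneg (hφ01 ω).1]
        nlinarith [(hφ01 ω).2, hr0 ω]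
      have hpφ : Integrable (fun ω => p ω * φ ω) μ :=
        Integrable.mono' hpintμ (hp.mul hφm).aestronglyMeasurable
          (ae_of_all _ (habs p hp0))
      have hqφ : Integrable (fun ω => q ω * φ ω) μ :=
        Integrable.mono' hqintμ (hq.mul hφm).aestronglyMeasurable
          (ae_of_all _ (habs q hq0))
      have hQφ : ∫ ω, φ ω ∂Q = ∫ ω, q ω * φ ω ∂μ := by
        rw [hQ]; exact integral_wd_aux μ q hq hq0 φ
      have hPφ' : ∫ ω, φ ω ∂P = ∫ ω, p ω * φ ω ∂μ := by
        rw [hP]; exact integral_wd_aux μ p hp hp0 φ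
      -- key: ∫ qφ dμ - exp ε * ∫ pφ dμ ≤ (Q E).toReal - exp ε * (P E).toReal
      have hkey : ∫ ω, q ω * φ ω ∂μ - Real.exp ε * ∫ ω, p ω * φ ω ∂μ ≤
          (Q E).toReal - Real.exp ε * (P E).toReal := by
        have hsub : Integrable (fun ω => q ω - Real.exp ε * p ω) μ :=
          hqintμ.sub (hpintμ.const_mul _)
        have hind : Integrable (E.indicator fun ω => q ω - Real.exp ε * p ω) μ :=
          hsub.indicator hE
        have hptwise : ∀ ω, q ω * φ ω - Real.exp ε * (p ω * φ ω) ≤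
            E.indicator (fun ω => q ω - Real.exp ε * p ω) ω := by
          intro ω
          by_cases hω : ω ∈ E
          · rw [Set.indicator_of_mem hω]
            have : Real.exp ε * p ω < q ω := hω
            nlinarith [(hφ01 ω).1, (hφ01 ω).2]
          · rw [Set.indicator_of_notMem hω]
            have : q ω ≤ Real.exp ε * p ω := not_lt.mp hω
            nlinarith [(hφ01 ω).1, (hφ01 ω).2]
        have h1 : ∫ ω, (q ω * φ ω - Real.exp ε * (p ω * φ ω)) ∂μ ≤
            ∫ ω, E.indicator (fun ω => q ω - Real.exp ε * p ω) ω ∂μ :=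
          integral_mono (hqφ.sub (hpφ.const_mul _)) hind hptwise
        rw [integral_sub hqφ (hpφ.const_mul _), integral_const_mul] at h1
        rw [integral_indicator hE,
          integral_sub (hqintμ.restrict) ((hpintμ.const_mul _).restrict),
          integral_const_mul] at h1
        rw [hQ, hP, meas_wd_aux μ q hq hq0 hE, meas_wd_aux μ p hp hp0 hE]
        exact h1
      have hdp := h E hE
      have hexp : (0:ℝ) < Real.exp ε := Real.exp_pos ε
      have hPφx : ∫ ω, p ω * φ ω ∂μ ≤ x := hPφ' ▸ hPφ
      have : ∫ ω, φ ω ∂Q ≤ Real.exp ε * x + δ := by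
        rw [hQφ]
        nlinarith
      linarith
end

section
/- Let P₁, Q₁, P₂, Q₂ be probability measures on ℝ with densities p₁, q₁, p₂, q₂ with respect to Lebesgue measure. Define δ_⊗(ε) = ∫∫ (q₁(x)q₂(y) − e^ε p₁(x)p₂(y))₊ dx dy, δ₁(ε) = ∫ (q₁(x) − e^ε p₁(x))₊ dx, and L₂(y) = log(q₂(y)/p₂(y)) (well-defined where p₂(y), q₂(y) > 0). Then δ_⊗(ε) = ∫ δ₁(ε − L₂(y)) q₂(y) dy. -/
open MeasureTheory

theorem delta_tensor_recursion
    (p₁ q₁ p₂ q₂ : ℝ → ℝ)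
    (hp₁m : Measurable p₁) (hq₁m : Measurable q₁)
    (hp₂m : Measurable p₂) (hq₂m : Measurable q₂)
    (hp₁0 : ∀ x, 0 ≤ p₁ x) (hq₁0 : ∀ x, 0 ≤ q₁ x)
    (hp₂0 : ∀ y, 0 < p₂ y) (hq₂0 : ∀ y, 0 < q₂ y)
    (hp₁ : ∫ x, p₁ x = 1) (hq₁ : ∫ x, q₁ x = 1)
    (hp₂ : ∫ y, p₂ y = 1) (hq₂ : ∫ y, q₂ y = 1)
    (ε : ℝ)
    (δ₁ : ℝ → ℝ)
    (hδ₁ : ∀ ε' : ℝ, δ₁ ε' = ∫ x, max (q₁ x - Real.exp ε' * p₁ x) 0)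
    (L₂ : ℝ → ℝ) (hL₂ : ∀ y, L₂ y = Real.log (q₂ y / p₂ y)) :
    (∫ x, ∫ y, max (q₁ x * q₂ y - Real.exp ε * (p₁ x * p₂ y)) 0)
      = ∫ y, δ₁ (ε - L₂ y) * q₂ y := by
  have hq₁int : Integrable q₁ := by
    by_contra h
    rw [integral_undef h] at hq₁
    exact zero_ne_one hq₁
  have hq₂int : Integrable q₂ := by
    by_contra h
    rw [integral_undef h] at hq₂
    exact zero_ne_one hq₂
  set F : ℝ → ℝ → ℝ :=
    fun x y => max (q₁ x * q₂ y - Real.exp ε * (p₁ x * p₂ y)) 0 with hF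
  have hFmeas : Measurable (Function.uncurry F) := by
    apply Measurable.max _ measurable_const
    exact ((hq₁m.comp measurable_fst).mul (hq₂m.comp measurable_snd)).sub
      (measurable_const.mul ((hp₁m.comp measurable_fst).mul (hp₂m.comp measurable_snd)))
  have hFint : Integrable (Function.uncurry F) (volume.prod volume) := by
    refine (hq₁int.mul_prod hq₂int).mono' hFmeas.aestronglyMeasurable ?_
    filter_upwards with z
    have h0 : (0:ℝ) ≤ q₁ z.1 * q₂ z.2 := mul_nonneg (hq₁0 _) (hq₂0 _).le
    rw [Real.norm_eq_abs, abs_of_nonneg (le_max_right _ _)]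
    refine max_le ?_ h0
    have : (0:ℝ) ≤ Real.exp ε * (p₁ z.1 * p₂ z.2) :=
      mul_nonneg (Real.exp_pos ε).le (mul_nonneg (hp₁0 _) (hp₂0 _).le)
    linarith
  have hswap : (∫ x, ∫ y, F x y) = ∫ y, ∫ x, F x y :=
    integral_integral_swap hFint
  rw [hF] at hswap
  rw [hswap]
  congr 1
  funext y
  have hexp : Real.exp (ε - L₂ y) = Real.exp ε * (p₂ y / q₂ y) := by
    rw [hL₂, Real.exp_sub, Real.exp_log (div_pos (hq₂0 y) (hp₂0 y))]
    field_simp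
  rw [hδ₁, ← integral_mul_const]
  congr 1
  funext x
  have hq : q₂ y ≠ 0 := (hq₂0 y).ne'
  show max (q₁ x * q₂ y - Real.exp ε * (p₁ x * p₂ y)) 0
      = max (q₁ x - Real.exp (ε - L₂ y) * p₁ x) 0 * q₂ y
  rw [max_mul_of_nonneg _ _ (hq₂0 y).le, zero_mul]
  congr 1
  rw [hexp]
  field_simp
end

section
/- Let f = T(P,Q) and define f⁻¹(α) = inf{t ∈ [0,1] : f(t) ≤ α}. Then f⁻¹ = T(Q,P). -/
open MeasureTheory
open scoped ENNReal

/-- Generalized inverse of a trade-off function. -/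
noncomputable def tradeOffInv (f : ℝ → ℝ) (α : ℝ) : ℝ :=
  sInf {t ∈ Set.Icc (0:ℝ) 1 | f t ≤ α}

section Helpers

variable {Ω : Type*} [MeasurableSpace Ω] {P Q : Measure Ω}

def tSet (P Q : Measure Ω) (α : ℝ) : Set ℝ :=
  {β | ∃ φ : Ω → ℝ, Measurable φ ∧ (∀ x, φ x ∈ Set.Icc (0:ℝ) 1) ∧
    (∫ x, φ x ∂P) ≤ α ∧ β = 1 - ∫ x, φ x ∂Q}

lemma tradeOff_eq_sInf (α : ℝ) : tradeOff P Q α = sInf (tSet P Q α) := rfl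

lemma integrable_test [IsFiniteMeasure P] {φ : Ω → ℝ} (hm : Measurable φ)
    (hb : ∀ x, φ x ∈ Set.Icc (0:ℝ) 1) : Integrable φ P := by
  refine (integrable_const (1:ℝ)).mono' hm.aestronglyMeasurable (ae_of_all _ fun x => ?_)
  rw [Real.norm_eq_abs, abs_le]
  exact ⟨by linarith [(hb x).1], (hb x).2⟩

lemma integral_test_mem [IsProbabilityMeasure P] {φ : Ω → ℝ} (hm : Measurable φ)
    (hb : ∀ x, φ x ∈ Set.Icc (0:ℝ) 1) : (∫ x, φ x ∂P) ∈ Set.Icc (0:ℝ) 1 := by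
  constructor
  · exact integral_nonneg fun x => (hb x).1
  · calc ∫ x, φ x ∂P ≤ ∫ _, (1:ℝ) ∂P :=
        integral_mono (integrable_test hm hb) (integrable_const 1) fun x => (hb x).2
    _ = 1 := by simp

lemma bddBelow_tSet [IsProbabilityMeasure Q] (α : ℝ) : BddBelow (tSet P Q α) := by
  refine ⟨0, fun β hβ => ?_⟩
  obtain ⟨φ, hm, hb, -, rfl⟩ := hβ
  have := (integral_test_mem (P := Q) hm hb).2
  linarith

lemma one_mem_tSet [IsProbabilityMeasure P] [IsProbabilityMeasure Q] {α : ℝ} (hα : 0 ≤ α) :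
    (1:ℝ) ∈ tSet P Q α := by
  refine ⟨fun _ => 0, measurable_const, fun x => ⟨le_rfl, zero_le_one⟩, by simpa using hα, by simp⟩

lemma tradeOff_le_of_test [IsProbabilityMeasure Q] {φ : Ω → ℝ} {α : ℝ} (hm : Measurable φ)
    (hb : ∀ x, φ x ∈ Set.Icc (0:ℝ) 1) (hα : (∫ x, φ x ∂P) ≤ α) :
    tradeOff P Q α ≤ 1 - ∫ x, φ x ∂Q :=
  csInf_le (bddBelow_tSet α) ⟨φ, hm, hb, hα, rfl⟩

lemma tradeOff_nonneg [IsProbabilityMeasure P] [IsProbabilityMeasure Q] {α : ℝ} (hα : 0 ≤ α) :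
    0 ≤ tradeOff P Q α :=
  le_csInf ⟨1, one_mem_tSet hα⟩ fun β hβ => by
    obtain ⟨φ, hm, hb, -, rfl⟩ := hβ
    have := (integral_test_mem (P := Q) hm hb).2
    linarith

/-- the `α > 0` case of the hard direction -/
lemma tradeOff_swap_le_of_pos [IsProbabilityMeasure P] [IsProbabilityMeasure Q] {α t : ℝ}
    (hα : 0 < α) (ht0 : 0 ≤ t) (hft : tradeOff P Q t ≤ α) : tradeOff Q P α ≤ t := by
  refine le_of_forall_pos_le_add fun δ hδ => ?_
  set ε := δ * α with hε
  have hεpos : 0 < ε := by positivity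
  -- extract a near-optimal test
  have hne : (tSet P Q t).Nonempty := ⟨1, one_mem_tSet ht0⟩
  rw [tradeOff_eq_sInf] at hft
  obtain ⟨β, hβmem, hβlt⟩ := (Real.sInf_le_iff (bddBelow_tSet t) hne).1 hft ε hεpos
  obtain ⟨φ, hm, hb, hP, rfl⟩ := hβmem
  set c : ℝ := α / (α + ε) with hc
  have hc0 : 0 ≤ c := by positivity
  have hc1 : c ≤ 1 := by
    rw [hc, div_le_one (by linarith)]; linarith
  set ψ : Ω → ℝ := fun x => c * (1 - φ x) with hψ
  have hψm : Measurable ψ := (measurable_const.sub hm).const_mul c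
  have hψb : ∀ x, ψ x ∈ Set.Icc (0:ℝ) 1 := fun x => by
    have h1 := (hb x).1; have h2 := (hb x).2
    refine ⟨mul_nonneg hc0 (by linarith), ?_⟩
    show c * (1 - φ x) ≤ 1
    exact mul_le_one₀ hc1 (by linarith) (by linarith)
  have hintφP := integrable_test (P := P) hm hb
  have hintφQ := integrable_test (P := Q) hm hb
  have hψQ : (∫ x, ψ x ∂Q) ≤ α := by
    have : (∫ x, ψ x ∂Q) = c * (1 - ∫ x, φ x ∂Q) := by
      rw [hψ, integral_const_mul, integral_sub (integrable_const 1) hintφQ]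
      simp
    rw [this]
    have h1 : 1 - ∫ x, φ x ∂Q ≤ α + ε := le_of_lt (by linarith)
    have h0 : 0 ≤ 1 - ∫ x, φ x ∂Q := by
      have := (integral_test_mem (P := Q) hm hb).2; linarith
    calc c * (1 - ∫ x, φ x ∂Q) ≤ c * (α + ε) := by
          exact mul_le_mul_of_nonneg_left h1 hc0
      _ = α := by rw [hc]; field_simp
  have key := tradeOff_le_of_test (P := Q) (Q := P) hψm hψb hψQ
  have hψP : (∫ x, ψ x ∂P) = c * (1 - ∫ x, φ x ∂P) := by
    rw [hψ, integral_const_mul, integral_sub (integrable_const 1) hintφP]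
    simp
  have h1t : 1 - t ≤ 1 - ∫ x, φ x ∂P := by linarith
  have hεα : ε / (α + ε) ≤ δ := by
    rw [div_le_iff₀ (by linarith), hε]
    nlinarith
  have : 1 - ∫ x, ψ x ∂P ≤ t + δ := by
    rw [hψP]
    have hcle : c * (1 - t) ≤ c * (1 - ∫ x, φ x ∂P) := mul_le_mul_of_nonneg_left h1t hc0
    have h1c : 1 - c = ε / (α + ε) := by rw [hc]; field_simp; ring
    nlinarith
  linarith

lemma tradeOff_swap_le_of_zero [IsProbabilityMeasure P] [IsProbabilityMeasure Q] {t : ℝ}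
    (ht0 : 0 ≤ t) (hft : tradeOff P Q t ≤ 0) : tradeOff Q P 0 ≤ t := by
  obtain ⟨s, hsm, hs1, hs2⟩ := Measure.mutuallySingular_singularPart P Q
  set B := sᶜ with hB
  have hBm : MeasurableSet B := hsm.compl
  have hQB : Q B = 0 := hs2
  have hsingBc : P.singularPart Q Bᶜ = 0 := by rw [hB, compl_compl]; exact hs1
  set χ : Ω → ℝ := B.indicator (fun _ => 1) with hχ
  have hχm : Measurable χ := measurable_const.indicator hBm
  have hχb : ∀ x, χ x ∈ Set.Icc (0:ℝ) 1 := fun x => by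
    by_cases h : x ∈ B <;> simp [hχ, h]
  have hχQ : (∫ x, χ x ∂Q) = 0 := by
    rw [hχ, integral_indicator_const _ hBm, measureReal_def, hQB]; simp
  have hχP : (∫ x, χ x ∂P) = (P B).toReal := by
    rw [hχ, integral_indicator_const _ hBm]; simp [measureReal_def]
  have key1 : tradeOff Q P 0 ≤ 1 - (P B).toReal := by
    have := tradeOff_le_of_test (P := Q) (Q := P) hχm hχb (le_of_eq hχQ)
    rwa [hχP] at this
  -- it remains to show `1 - (P B).toReal ≤ t`
  have key2 : 1 - t ≤ (P B).toReal := by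
    refine le_of_forall_pos_le_add fun ε hε => ?_
    set ρ : Ω → ℝ≥0∞ := P.rnDeriv Q with hρ
    have hρm : Measurable ρ := Measure.measurable_rnDeriv P Q
    have hρint : ∫⁻ x, ρ x ∂Q ≠ ∞ := by
      refine ne_top_of_le_ne_top ?_ (Measure.lintegral_rnDeriv_le (μ := P) (ν := Q))
      simp
    have hρ1 : ∫⁻ x, ρ x ∂Q ≤ 1 := by
      refine le_trans (Measure.lintegral_rnDeriv_le (μ := P) (ν := Q)) ?_
      simp
    obtain ⟨δ, hδ0, hδ⟩ := exists_pos_setLIntegral_lt_of_measure_lt (μ := Q) hρint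
      (ε := ENNReal.ofReal (ε/2)) (by simp [ENNReal.ofReal_eq_zero]; linarith)
    set δ' : ℝ≥0∞ := min δ 1 with hδ'
    have hδ'0 : δ' ≠ 0 := (lt_min hδ0 zero_lt_one).ne'
    have hδ'top : δ' ≠ ∞ := by
      simp [hδ']
    set d : ℝ := δ'.toReal with hd
    have hd0 : 0 < d := ENNReal.toReal_pos hδ'0 hδ'top
    set ε₂ : ℝ := (ε/2) * (d/2) with hε₂
    have hε₂0 : 0 < ε₂ := by positivity
    -- extract a near-optimal test at level t
    have hne : (tSet P Q t).Nonempty := ⟨1, one_mem_tSet ht0⟩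
    rw [tradeOff_eq_sInf] at hft
    obtain ⟨β, hβmem, hβlt⟩ := (Real.sInf_le_iff (bddBelow_tSet t) hne).1 hft ε₂ hε₂0
    obtain ⟨φ, hm, hb, hP, rfl⟩ := hβmem
    set g : Ω → ℝ := fun x => 1 - φ x with hg
    have hgm : Measurable g := measurable_const.sub hm
    have hgb : ∀ x, g x ∈ Set.Icc (0:ℝ) 1 := fun x => by
      have h1 := (hb x).1; have h2 := (hb x).2
      exact ⟨by simp [hg]; linarith, by simp [hg]; linarith⟩
    have hgQ : (∫ x, g x ∂Q) < ε₂ := by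
      rw [hg]
      rw [integral_sub (integrable_const 1) (integrable_test hm hb)]
      simp only [integral_const, measureReal_def, measure_univ, ENNReal.toReal_one, smul_eq_mul, one_mul]
      linarith [hβlt]
    have hgQ0 : (0:ℝ) ≤ ∫ x, g x ∂Q := integral_nonneg fun x => (hgb x).1
    have hgP : 1 - t ≤ ∫ x, g x ∂P := by
      rw [hg, integral_sub (integrable_const 1) (integrable_test hm hb)]
      simp only [integral_const, measureReal_def, measure_univ, ENNReal.toReal_one, smul_eq_mul, one_mul]
      linarith
    -- decompose P
    set sing := P.singularPart Q with hsing
    set wd := Q.withDensity ρ with hwd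
    have hPds : ∫ x, g x ∂P = (∫ x, g x ∂sing) + ∫ x, g x ∂wd := by
      conv_lhs => rw [Measure.haveLebesgueDecomposition_add P Q]
      exact integral_add_measure (integrable_test hgm hgb) (integrable_test hgm hgb)
    -- singular part bound
    have hsingbd : ∫ x, g x ∂sing ≤ (P B).toReal := by
      have h1 : ∫ x, g x ∂sing ≤ ∫ _, (1:ℝ) ∂sing :=
        integral_mono (integrable_test hgm hgb) (integrable_const 1) fun x => (hgb x).2
      have h2 : ∫ _, (1:ℝ) ∂sing = (sing Set.univ).toReal := by simp [measureReal_def]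
      have h3 : sing Set.univ ≤ sing B := by
        have := measure_union_le (μ := sing) B Bᶜ
        rwa [Set.union_compl_self, hsingBc, add_zero] at this
      have h4 : sing B ≤ P B := Measure.le_iff'.1 (Measure.singularPart_le P Q) B
      have h5 : (sing Set.univ).toReal ≤ (P B).toReal :=
        ENNReal.toReal_mono (measure_ne_top P B) (le_trans h3 h4)
      linarith
    -- absolutely continuous part bound
    have hwdbd : ∫ x, g x ∂wd ≤ ε := by
      set g' : Ω → ℝ≥0∞ := fun x => ENNReal.ofReal (g x) with hg'
      have hg'm : Measurable g' := hgm.ennreal_ofReal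
      have hg'1 : ∀ x, g' x ≤ 1 := fun x => ENNReal.ofReal_le_one.2 (hgb x).2
      have h1 : ENNReal.ofReal (∫ x, g x ∂wd) = ∫⁻ x, g' x ∂wd :=
        ofReal_integral_eq_lintegral_ofReal (integrable_test hgm hgb)
          (ae_of_all _ fun x => (hgb x).1)
      have h2 : ∫⁻ x, g' x ∂wd = ∫⁻ x, ρ x * g' x ∂Q := by
        rw [hwd, lintegral_withDensity_eq_lintegral_mul Q hρm hg'm]
        rfl
      set A : Set Ω := {x | ENNReal.ofReal (ε/2) ≤ g' x} with hA
      have hAm : MeasurableSet A := measurableSet_le measurable_const hg'm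
      -- Markov: Q A is small
      have hQA : Q A ≤ ENNReal.ofReal (d/2) := by
        by_contra hcon
        push_neg at hcon
        have hmar := mul_meas_ge_le_lintegral₀ (μ := Q) hg'm.aemeasurable (ENNReal.ofReal (ε/2))
        have hlQ : ∫⁻ x, g' x ∂Q = ENNReal.ofReal (∫ x, g x ∂Q) :=
          (ofReal_integral_eq_lintegral_ofReal (integrable_test hgm hgb)
            (ae_of_all _ fun x => (hgb x).1)).symm
        have hε2ne0 : ENNReal.ofReal (ε/2) ≠ 0 := by
          simp [ENNReal.ofReal_eq_zero]; linarith
        have hstrict : ENNReal.ofReal ε₂ < ENNReal.ofReal (ε/2) * Q A := by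
          calc ENNReal.ofReal ε₂ = ENNReal.ofReal (ε/2) * ENNReal.ofReal (d/2) := by
                rw [hε₂, ENNReal.ofReal_mul (by linarith)]
            _ < ENNReal.ofReal (ε/2) * Q A := by
                exact ENNReal.mul_lt_mul_right hε2ne0 ENNReal.ofReal_ne_top hcon
        have : ENNReal.ofReal (ε/2) * Q A < ENNReal.ofReal ε₂ := by
          calc ENNReal.ofReal (ε/2) * Q A ≤ ∫⁻ x, g' x ∂Q := hmar
            _ = ENNReal.ofReal (∫ x, g x ∂Q) := hlQ
            _ < ENNReal.ofReal ε₂ := by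
                exact (ENNReal.ofReal_lt_ofReal_iff hε₂0).2 hgQ
        exact absurd (lt_trans hstrict this) (lt_irrefl _)
      have hQAδ : Q A < δ := by
        calc Q A ≤ ENNReal.ofReal (d/2) := hQA
          _ < ENNReal.ofReal d := (ENNReal.ofReal_lt_ofReal_iff hd0).2 (by linarith)
          _ = δ' := by rw [hd, ENNReal.ofReal_toReal hδ'top]
          _ ≤ δ := min_le_left _ _
      -- split the lintegral
      have hsplit : ∫⁻ x, ρ x * g' x ∂Q =
          (∫⁻ x in A, ρ x * g' x ∂Q) + ∫⁻ x in Aᶜ, ρ x * g' x ∂Q :=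
        (lintegral_add_compl _ hAm).symm
      have hon : ∫⁻ x in A, ρ x * g' x ∂Q < ENNReal.ofReal (ε/2) := by
        refine lt_of_le_of_lt (setLIntegral_mono hρm fun x _ => ?_) (hδ A hQAδ)
        calc ρ x * g' x ≤ ρ x * 1 := mul_le_mul_right (hg'1 x) _
          _ = ρ x := mul_one _
      have hoff : ∫⁻ x in Aᶜ, ρ x * g' x ∂Q ≤ ENNReal.ofReal (ε/2) := by
        have step1 : ∫⁻ x in Aᶜ, ρ x * g' x ∂Q ≤ ∫⁻ x, ρ x * ENNReal.ofReal (ε/2) ∂Q := by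
          refine le_trans (setLIntegral_mono (hρm.mul measurable_const) fun x hx => ?_)
            (setLIntegral_le_lintegral _ _)
          have : g' x ≤ ENNReal.ofReal (ε/2) := le_of_lt (by simpa [hA] using hx)
          exact mul_le_mul_right this _
        calc ∫⁻ x in Aᶜ, ρ x * g' x ∂Q ≤ ∫⁻ x, ρ x * ENNReal.ofReal (ε/2) ∂Q := step1
          _ = (∫⁻ x, ρ x ∂Q) * ENNReal.ofReal (ε/2) := by rw [lintegral_mul_const _ hρm]
          _ ≤ 1 * ENNReal.ofReal (ε/2) := mul_le_mul_left hρ1 _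
          _ = ENNReal.ofReal (ε/2) := one_mul _
      have htot : ENNReal.ofReal (∫ x, g x ∂wd) < ENNReal.ofReal ε := by
        calc ENNReal.ofReal (∫ x, g x ∂wd) = ∫⁻ x, ρ x * g' x ∂Q := by rw [h1, h2]
          _ = (∫⁻ x in A, ρ x * g' x ∂Q) + ∫⁻ x in Aᶜ, ρ x * g' x ∂Q := hsplit
          _ < ENNReal.ofReal (ε/2) + ENNReal.ofReal (ε/2) :=
              ENNReal.add_lt_add_of_lt_of_le (ne_of_lt (lt_of_le_of_lt hoff
                ENNReal.ofReal_lt_top)) hon hoff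
          _ = ENNReal.ofReal ε := by
              rw [← ENNReal.ofReal_add (by linarith) (by linarith)]; ring_nf
      have := (ENNReal.ofReal_lt_ofReal_iff hε).1 htot
      linarith
    linarith
  linarith

theorem tradeOffInv_eq_swap' [IsProbabilityMeasure P] [IsProbabilityMeasure Q] :
    ∀ α ∈ Set.Icc (0:ℝ) 1, tradeOffInv (tradeOff P Q) α = tradeOff Q P α := by
  intro α hα
  obtain ⟨hα0, hα1⟩ := hα
  have hSne : ({t ∈ Set.Icc (0:ℝ) 1 | tradeOff P Q t ≤ α}).Nonempty := by
    refine ⟨1, ⟨zero_le_one, le_rfl⟩, ?_⟩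
    have h1 : tradeOff P Q 1 ≤ 1 - ∫ x, (1:ℝ) ∂Q :=
      tradeOff_le_of_test measurable_const (fun x => ⟨zero_le_one, le_rfl⟩) (by simp)
    simp at h1
    linarith
  have hSbdd : BddBelow {t ∈ Set.Icc (0:ℝ) 1 | tradeOff P Q t ≤ α} :=
    ⟨0, fun t ht => ht.1.1⟩
  rw [tradeOffInv]
  apply le_antisymm
  · rw [tradeOff_eq_sInf]
    refine le_csInf ⟨1, one_mem_tSet hα0⟩ fun β hβ => ?_
    obtain ⟨ψ, hψm, hψb, hψQ, rfl⟩ := hβ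
    have hmemP := integral_test_mem (P := P) hψm hψb
    refine csInf_le hSbdd ⟨⟨by linarith [hmemP.2], by linarith [hmemP.1]⟩, ?_⟩
    set φ : Ω → ℝ := fun x => 1 - ψ x with hφ
    have hφm : Measurable φ := measurable_const.sub hψm
    have hφb : ∀ x, φ x ∈ Set.Icc (0:ℝ) 1 := fun x => by
      have h1 := (hψb x).1; have h2 := (hψb x).2
      exact ⟨by simp [hφ]; linarith, by simp [hφ]; linarith⟩
    have hφP : (∫ x, φ x ∂P) = 1 - ∫ x, ψ x ∂P := by
      rw [hφ, integral_sub (integrable_const 1) (integrable_test hψm hψb)]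
      simp
    have hφQ : (∫ x, φ x ∂Q) = 1 - ∫ x, ψ x ∂Q := by
      rw [hφ, integral_sub (integrable_const 1) (integrable_test hψm hψb)]
      simp
    have := tradeOff_le_of_test (P := P) (Q := Q) hφm hφb (le_of_eq hφP)
    rw [hφQ] at this
    linarith
  · refine le_csInf hSne fun t ht => ?_
    obtain ⟨⟨ht0, ht1⟩, hft⟩ := ht
    rcases eq_or_lt_of_le hα0 with h0 | hpos
    · rw [← h0] at hft ⊢
      exact tradeOff_swap_le_of_zero ht0 hft
    · exact tradeOff_swap_le_of_pos hpos ht0 hft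


end Helpers

theorem tradeOffInv_eq_swap {Ω : Type*} [MeasurableSpace Ω]
    (P Q : Measure Ω) [IsProbabilityMeasure P] [IsProbabilityMeasure Q] :
    ∀ α ∈ Set.Icc (0:ℝ) 1, tradeOffInv (tradeOff P Q) α = tradeOff Q P α :=
  tradeOffInv_eq_swap' (P := P) (Q := Q)
end

section
/- Let δ_n(ε) be the dual representation of f^{⊗n} = T(P^n, Q^n) for probability measures P, Q with densities p, q on ℝ, and L(x) = log(q(x)/p(x)). Then the recursion δ₀(ε) = max{1 − e^ε, 0} and δ_{k+1}(ε) = ∫ δ_k(ε − L(x)) q(x) dx holds, i.e., δ_{k+1} equals the dual representation of f^{⊗(k+1)} = T(P^{k+1}, Q^{k+1}). -/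
open MeasureTheory

noncomputable section DeltaAux

/-- The n-fold product of Lebesgue measure. -/
def muPi (n : ℕ) : Measure (Fin n → ℝ) := Measure.pi fun _ => volume

instance (n : ℕ) : SigmaFinite (muPi n) := inferInstanceAs (SigmaFinite (Measure.pi _))

lemma lintegral_pi_cons (n : ℕ) (G : (Fin (n+1) → ℝ) → ENNReal) (hG : Measurable G) :
    ∫⁻ x, G x ∂(muPi (n+1)) = ∫⁻ y : ℝ, ∫⁻ w : Fin n → ℝ, G (Fin.cons y w) ∂(muPi n) := by
  have h := measurePreserving_piFinSuccAbove (fun _ : Fin (n+1) => (volume : Measure ℝ)) 0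
  set e := MeasurableEquiv.piFinSuccAbove (fun _ : Fin (n+1) => ℝ) 0
  calc ∫⁻ x, G x ∂(muPi (n+1)) = ∫⁻ x, (G ∘ e.symm) (e x) ∂(muPi (n+1)) := by
        simp
    _ = ∫⁻ z, (G ∘ e.symm) z ∂((volume : Measure ℝ).prod (muPi n)) :=
        h.lintegral_comp (hG.comp e.symm.measurable)
    _ = ∫⁻ y : ℝ, ∫⁻ w : Fin n → ℝ, G (Fin.cons y w) ∂(muPi n) := by
        rw [lintegral_prod _ (hG.comp e.symm.measurable).aemeasurable]
        congr 1; ext y; congr 1; ext w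
        show G (e.symm (y, w)) = G (Fin.cons y w)
        congr 1
        simp [e, MeasurableEquiv.piFinSuccAbove, Fin.insertNthEquiv, Fin.insertNth_zero]

lemma lintegral_pi_prod : ∀ (n : ℕ) (f : Fin n → ℝ → ENNReal), (∀ i, Measurable (f i)) →
    ∫⁻ x, ∏ i, f i (x i) ∂(muPi n) = ∏ i, ∫⁻ y, f i y
  | 0, f, _ => by
      simp [muPi, Measure.pi_of_empty]
  | (n+1), f, hf => by
      have hm : Measurable fun x : Fin (n+1) → ℝ => ∏ i, f i (x i) :=
        Finset.measurable_prod _ fun i _ => (hf i).comp (measurable_pi_apply i)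
      have hm' : Measurable fun w : Fin n → ℝ => ∏ i, f i.succ (w i) :=
        Finset.measurable_prod _ fun i _ => (hf i.succ).comp (measurable_pi_apply i)
      rw [lintegral_pi_cons n _ hm]
      simp_rw [Fin.prod_univ_succ, Fin.cons_zero, Fin.cons_succ]
      have h1 : ∀ y : ℝ, ∫⁻ w, f 0 y * ∏ i, f i.succ (w i) ∂(muPi n)
          = f 0 y * ∫⁻ w, ∏ i, f i.succ (w i) ∂(muPi n) :=
        fun y => lintegral_const_mul _ hm'
      simp_rw [h1, lintegral_pi_prod n _ fun i => hf i.succ]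
      exact lintegral_mul_const _ (hf 0)

/-- product measure of a withDensity measure is withDensity of the product density -/
lemma pi_withDensity (n : ℕ) (f : ℝ → ℝ) (hf : Measurable f) :
    Measure.pi (fun _ : Fin n => volume.withDensity fun t => ENNReal.ofReal (f t)) =
      (muPi n).withDensity fun x => ∏ i, ENNReal.ofReal (f (x i)) := by
  refine Measure.pi_eq fun s hs => ?_
  rw [withDensity_apply _ (MeasurableSet.univ_pi hs),
    ← lintegral_indicator (MeasurableSet.univ_pi hs)
      (fun x => ∏ i, ENNReal.ofReal (f (x i)))]
  have hind : (Set.univ.pi s).indicator (fun x => ∏ i, ENNReal.ofReal (f (x i))) =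
      fun x => ∏ i, (s i).indicator (fun t => ENNReal.ofReal (f t)) (x i) := by
    funext x
    by_cases hx : x ∈ Set.univ.pi s
    · rw [Set.indicator_of_mem hx]
      exact Finset.prod_congr rfl fun i _ =>
        (Set.indicator_of_mem (hx i (Set.mem_univ i)) fun t => ENNReal.ofReal (f t)).symm
    · rw [Set.indicator_of_notMem hx]
      obtain ⟨i, hi⟩ : ∃ i, x i ∉ s i := by simpa [Set.mem_pi] using hx
      exact (Finset.prod_eq_zero (Finset.mem_univ i)
        (Set.indicator_of_notMem hi _)).symm
  rw [hind, lintegral_pi_prod n _ fun i => (hf.ennreal_ofReal).indicator (hs i)]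
  exact Finset.prod_congr rfl fun i _ => by
    rw [lintegral_indicator (hs i), ← withDensity_apply _ (hs i)]

/-- ENNReal version of ∫ (qₙ - e^ε pₙ)₊ -/
def Jfun (p q : ℝ → ℝ) (n : ℕ) (ε : ℝ) : ENNReal :=
  ∫⁻ x, ENNReal.ofReal ((∏ i, q (x i)) - Real.exp ε * ∏ i, p (x i)) ∂(muPi n)

lemma prodp_measurable {p : ℝ → ℝ} (hpm : Measurable p) (n : ℕ) :
    Measurable fun x : Fin n → ℝ => ∏ i, p (x i) :=
  Finset.measurable_prod _ fun i _ => hpm.comp (measurable_pi_apply i)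

lemma Jfun_integrand_measurable {p q : ℝ → ℝ} (hpm : Measurable p) (hqm : Measurable q)
    (n : ℕ) :
    Measurable fun z : ℝ × (Fin n → ℝ) =>
      ENNReal.ofReal ((∏ i, q (z.2 i)) - Real.exp z.1 * ∏ i, p (z.2 i)) := by
  apply Measurable.ennreal_ofReal
  exact ((prodp_measurable hqm n).comp measurable_snd).sub
    (((Real.measurable_exp.comp measurable_fst)).mul
      ((prodp_measurable hpm n).comp measurable_snd))

lemma Jfun_measurable {p q : ℝ → ℝ} (hpm : Measurable p) (hqm : Measurable q) (n : ℕ) :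
    Measurable fun ε => Jfun p q n ε :=
  Measurable.lintegral_prod_right' (Jfun_integrand_measurable hpm hqm n)

lemma prodq_lintegral {q : ℝ → ℝ} (hqm : Measurable q) (hq0 : ∀ x, 0 ≤ q x)
    (hq1 : ∫⁻ t, ENNReal.ofReal (q t) = 1) (n : ℕ) :
    ∫⁻ x, ENNReal.ofReal (∏ i, q (x i)) ∂(muPi n) = 1 := by
  have h : ∀ x : Fin n → ℝ, ENNReal.ofReal (∏ i, q (x i)) =
      ∏ i, ENNReal.ofReal (q (x i)) :=
    fun x => ENNReal.ofReal_prod_of_nonneg fun i _ => hq0 (x i)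
  simp_rw [h]
  rw [lintegral_pi_prod n _ fun i => hqm.ennreal_ofReal]
  simp [hq1]

lemma Jfun_le_one {p q : ℝ → ℝ} (hqm : Measurable q) (hp0 : ∀ x, 0 ≤ p x)
    (hq0 : ∀ x, 0 ≤ q x) (hq1 : ∫⁻ t, ENNReal.ofReal (q t) = 1) (n : ℕ) (ε : ℝ) :
    Jfun p q n ε ≤ 1 := by
  refine le_trans (lintegral_mono fun x => ?_) (le_of_eq (prodq_lintegral hqm hq0 hq1 n))
  exact ENNReal.ofReal_le_ofReal (sub_le_self _
    (mul_nonneg (Real.exp_pos ε).le (Finset.prod_nonneg fun i _ => hp0 _)))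

lemma Jfun_zero (p q : ℝ → ℝ) (ε : ℝ) :
    Jfun p q 0 ε = ENNReal.ofReal (1 - Real.exp ε) := by
  simp [Jfun, muPi, Measure.pi_of_empty]

lemma Jfun_succ {p q : ℝ → ℝ} (hpm : Measurable p) (hqm : Measurable q)
    (hp0 : ∀ x, 0 < p x) (hq0 : ∀ x, 0 < q x)
    (L : ℝ → ℝ) (hL : ∀ x, L x = Real.log (q x / p x)) (n : ℕ) (ε : ℝ) :
    Jfun p q (n+1) ε = ∫⁻ y, ENNReal.ofReal (q y) * Jfun p q n (ε - L y) := by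
  have hm : Measurable fun x : Fin (n+1) → ℝ =>
      ENNReal.ofReal ((∏ i, q (x i)) - Real.exp ε * ∏ i, p (x i)) :=
    ((prodp_measurable hqm _).sub (measurable_const.mul (prodp_measurable hpm _))).ennreal_ofReal
  rw [Jfun, lintegral_pi_cons _ _ hm]
  congr 1; funext y
  have key : Real.exp ε * p y = q y * Real.exp (ε - L y) := by
    rw [hL y, Real.exp_sub, Real.exp_log (div_pos (hq0 y) (hp0 y))]
    field_simp
    exact (mul_div_cancel_right₀ _ (hq0 y).ne').symm
  have hpt : ∀ w : Fin n → ℝ,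
      ENNReal.ofReal ((∏ i, q ((Fin.cons y w : Fin (n+1) → ℝ) i)) -
          Real.exp ε * ∏ i, p ((Fin.cons y w : Fin (n+1) → ℝ) i)) =
        ENNReal.ofReal (q y) *
          ENNReal.ofReal ((∏ i, q (w i)) - Real.exp (ε - L y) * ∏ i, p (w i)) := by
    intro w
    rw [Fin.prod_univ_succ, Fin.prod_univ_succ]
    simp only [Fin.cons_zero, Fin.cons_succ]
    rw [← ENNReal.ofReal_mul (hq0 y).le]
    congr 1
    rw [mul_sub]
    congr 1
    rw [show Real.exp ε * (p y * ∏ i, p (w i)) = (Real.exp ε * p y) * ∏ i, p (w i) by ring,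
      key]
    ring
  simp_rw [hpt]
  exact lintegral_const_mul _ (((prodp_measurable hqm _).sub
    (measurable_const.mul (prodp_measurable hpm _))).ennreal_ofReal)

lemma pi_withDensity' (n : ℕ) (f : ℝ → ℝ) (hf : Measurable f) (hf0 : ∀ x, 0 ≤ f x) :
    Measure.pi (fun _ : Fin n => volume.withDensity fun t => ENNReal.ofReal (f t)) =
      (muPi n).withDensity fun x => ENNReal.ofReal (∏ i, f (x i)) := by
  rw [pi_withDensity n f hf]
  congr 1
  funext x
  exact (ENNReal.ofReal_prod_of_nonneg fun i _ => hf0 (x i)).symm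

end DeltaAux

/-- Dual representation δ(ε) of the n-fold tensor product f^{⊗n} = T(Pⁿ, Qⁿ). -/
noncomputable def dualDelta (P Q : Measure ℝ) (n : ℕ) (ε : ℝ) : ℝ :=
  1 + conj01 (tradeOff (Measure.pi (fun _ : Fin n => P))
      (Measure.pi (fun _ : Fin n => Q))) (-Real.exp ε)

lemma dualDelta_eq_Jfun
    (p q : ℝ → ℝ) (hpm : Measurable p) (hqm : Measurable q)
    (hp0 : ∀ x, 0 < p x) (hq0 : ∀ x, 0 < q x)
    (P Q : Measure ℝ) [IsProbabilityMeasure P] [IsProbabilityMeasure Q]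
    (hP : P = volume.withDensity (fun x => ENNReal.ofReal (p x)))
    (hQ : Q = volume.withDensity (fun x => ENNReal.ofReal (q x)))
    (n : ℕ) (ε : ℝ) :
    dualDelta P Q n ε = (Jfun p q n ε).toReal := by
  classical
  have hp1 : ∫⁻ t, ENNReal.ofReal (p t) = 1 := by
    have h := measure_univ (μ := P)
    rwa [hP, withDensity_apply _ MeasurableSet.univ, setLIntegral_univ] at h
  have hq1 : ∫⁻ t, ENNReal.ofReal (q t) = 1 := by
    have h := measure_univ (μ := Q)
    rwa [hQ, withDensity_apply _ MeasurableSet.univ, setLIntegral_univ] at h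
  set μ := muPi n with hμ
  set gp : (Fin n → ℝ) → ENNReal := fun x => ENNReal.ofReal (∏ i, p (x i)) with hgp
  set gq : (Fin n → ℝ) → ENNReal := fun x => ENNReal.ofReal (∏ i, q (x i)) with hgq
  set jf : (Fin n → ℝ) → ENNReal :=
    fun x => ENNReal.ofReal ((∏ i, q (x i)) - Real.exp ε * ∏ i, p (x i)) with hjf
  have hgpm : Measurable gp := (prodp_measurable hpm n).ennreal_ofReal
  have hgqm : Measurable gq := (prodp_measurable hqm n).ennreal_ofReal
  have hjfm : Measurable jf :=
    ((prodp_measurable hqm n).sub (measurable_const.mul (prodp_measurable hpm n))).ennreal_ofReal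
  have hgpl : ∫⁻ x, gp x ∂μ = 1 := prodq_lintegral hpm (fun x => (hp0 x).le) hp1 n
  have hgql : ∫⁻ x, gq x ∂μ = 1 := prodq_lintegral hqm (fun x => (hq0 x).le) hq1 n
  have hPn : Measure.pi (fun _ : Fin n => P) = μ.withDensity gp := by
    rw [hP]; exact pi_withDensity' n p hpm (fun x => (hp0 x).le)
  have hQn : Measure.pi (fun _ : Fin n => Q) = μ.withDensity gq := by
    rw [hQ]; exact pi_withDensity' n q hqm (fun x => (hq0 x).le)
  set J := Jfun p q n ε with hJdef
  have hJint : J = ∫⁻ x, jf x ∂μ := rfl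
  have hJle : J ≤ 1 := Jfun_le_one hqm (fun x => (hp0 x).le) (fun x => (hq0 x).le) hq1 n ε
  have hJne : J ≠ ⊤ := (lt_of_le_of_lt hJle ENNReal.one_lt_top).ne
  -- conversion of Bochner integrals to lintegrals
  have conv : ∀ (g : (Fin n → ℝ) → ENNReal), Measurable g →
      ∀ φ : (Fin n → ℝ) → ℝ, Measurable φ → (∀ x, 0 ≤ φ x) →
      ∫ x, φ x ∂(μ.withDensity g) = (∫⁻ x, g x * ENNReal.ofReal (φ x) ∂μ).toReal := by
    intro g hg φ hφ h0
    rw [integral_eq_lintegral_of_nonneg_ae (ae_of_all _ h0) hφ.aestronglyMeasurable,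
      lintegral_withDensity_eq_lintegral_mul μ hg hφ.ennreal_ofReal]
    rfl
  have Ibnd : ∀ (g : (Fin n → ℝ) → ENNReal), (∫⁻ x, g x ∂μ) = 1 →
      ∀ φ : (Fin n → ℝ) → ℝ, (∀ x, φ x ∈ Set.Icc (0:ℝ) 1) →
      (∫⁻ x, g x * ENNReal.ofReal (φ x) ∂μ) ≤ 1 := by
    intro g hg φ h01
    calc ∫⁻ x, g x * ENNReal.ofReal (φ x) ∂μ ≤ ∫⁻ x, g x ∂μ := by
          refine lintegral_mono fun x => ?_
          calc g x * ENNReal.ofReal (φ x) ≤ g x * 1 :=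
                mul_le_mul_right (ENNReal.ofReal_le_one.2 (h01 x).2) _
            _ = g x := mul_one _
      _ = 1 := hg
  -- KEY 1 : weak duality
  have key1 : ∀ φ : (Fin n → ℝ) → ℝ, Measurable φ → (∀ x, φ x ∈ Set.Icc (0:ℝ) 1) →
      ∫ x, φ x ∂(Measure.pi fun _ : Fin n => Q) ≤
        J.toReal + Real.exp ε * ∫ x, φ x ∂(Measure.pi fun _ : Fin n => P) := by
    intro φ hφm h01
    rw [hQn, hPn, conv gq hgqm φ hφm (fun x => (h01 x).1),
      conv gp hgpm φ hφm (fun x => (h01 x).1)]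
    set Ip := ∫⁻ x, gp x * ENNReal.ofReal (φ x) ∂μ with hIp
    set Iq := ∫⁻ x, gq x * ENNReal.ofReal (φ x) ∂μ with hIq
    have hIpne : Ip ≠ ⊤ := (lt_of_le_of_lt (Ibnd gp hgpl φ h01) ENNReal.one_lt_top).ne
    have hmean : Iq ≤ J + ENNReal.ofReal (Real.exp ε) * Ip := by
      rw [hIp, ← lintegral_const_mul _ (f := fun x => gp x * ENNReal.ofReal (φ x))
          (hgpm.mul hφm.ennreal_ofReal), hJint,
        ← lintegral_add_left hjfm]
      refine lintegral_mono fun x => ?_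
      have hb0 : (0:ℝ) ≤ Real.exp ε * ∏ i, p (x i) :=
        mul_nonneg (Real.exp_pos ε).le (Finset.prod_nonneg fun i _ => (hp0 _).le)
      have ht1 : ENNReal.ofReal (φ x) ≤ 1 := ENNReal.ofReal_le_one.2 (h01 x).2
      have hob : ENNReal.ofReal (Real.exp ε) * gp x =
          ENNReal.ofReal (Real.exp ε * ∏ i, p (x i)) :=
        (ENNReal.ofReal_mul (Real.exp_pos ε).le).symm
      rcases le_total (∏ i, q (x i)) (Real.exp ε * ∏ i, p (x i)) with hab | hba
      · calc gq x * ENNReal.ofReal (φ x)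
            ≤ ENNReal.ofReal (Real.exp ε * ∏ i, p (x i)) * ENNReal.ofReal (φ x) :=
              mul_le_mul_left (ENNReal.ofReal_le_ofReal hab) _
          _ ≤ jf x + ENNReal.ofReal (Real.exp ε * ∏ i, p (x i)) * ENNReal.ofReal (φ x) :=
              le_add_self
          _ = jf x + ENNReal.ofReal (Real.exp ε) * (gp x * ENNReal.ofReal (φ x)) := by
              rw [← mul_assoc, hob]
      · have hsplit : gq x = jf x + ENNReal.ofReal (Real.exp ε * ∏ i, p (x i)) := by
          rw [hgq, hjf, ← ENNReal.ofReal_add (sub_nonneg.2 hba) hb0, sub_add_cancel]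
        rw [hsplit, add_mul]
        refine add_le_add ?_ ?_
        · calc jf x * ENNReal.ofReal (φ x) ≤ jf x * 1 := mul_le_mul_right ht1 _
            _ = jf x := mul_one _
        · rw [← mul_assoc, hob]
    have hfin : J + ENNReal.ofReal (Real.exp ε) * Ip ≠ ⊤ :=
      ENNReal.add_ne_top.2 ⟨hJne, ENNReal.mul_ne_top ENNReal.ofReal_ne_top hIpne⟩
    calc Iq.toReal ≤ (J + ENNReal.ofReal (Real.exp ε) * Ip).toReal :=
          ENNReal.toReal_mono hfin hmean
      _ = J.toReal + Real.exp ε * Ip.toReal := by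
          rw [ENNReal.toReal_add hJne (ENNReal.mul_ne_top ENNReal.ofReal_ne_top hIpne),
            ENNReal.toReal_mul, ENNReal.toReal_ofReal (Real.exp_pos ε).le]
  -- KEY 2 : the Neyman–Pearson test attains the value
  have key2 : ∃ φ : (Fin n → ℝ) → ℝ, Measurable φ ∧ (∀ x, φ x ∈ Set.Icc (0:ℝ) 1) ∧
      (∫ x, φ x ∂(Measure.pi fun _ : Fin n => Q)) -
        Real.exp ε * ∫ x, φ x ∂(Measure.pi fun _ : Fin n => P) = J.toReal := by
    set A : Set (Fin n → ℝ) := {x | Real.exp ε * ∏ i, p (x i) < ∏ i, q (x i)} with hA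
    have hAm : MeasurableSet A :=
      measurableSet_lt (measurable_const.mul (prodp_measurable hpm n)) (prodp_measurable hqm n)
    refine ⟨A.indicator fun _ => 1, measurable_const.indicator hAm, ?_, ?_⟩
    · intro x
      by_cases hx : x ∈ A <;>
        simp [Set.indicator_of_mem, Set.indicator_of_notMem, hx, Set.mem_Icc, zero_le_one]
    · have h01 : ∀ x, (A.indicator fun _ => (1:ℝ)) x ∈ Set.Icc (0:ℝ) 1 := by
        intro x
        by_cases hx : x ∈ A <;>
          simp [Set.indicator_of_mem, Set.indicator_of_notMem, hx, Set.mem_Icc, zero_le_one]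
      have hindic : ∀ (g : (Fin n → ℝ) → ENNReal),
          (fun x => g x * ENNReal.ofReal ((A.indicator fun _ => (1:ℝ)) x)) = A.indicator g := by
        intro g
        funext x
        by_cases hx : x ∈ A <;> simp [hx]
      rw [hQn, hPn, conv gq hgqm _ (measurable_const.indicator hAm) (fun x => (h01 x).1),
        conv gp hgpm _ (measurable_const.indicator hAm) (fun x => (h01 x).1),
        hindic gq, hindic gp, lintegral_indicator hAm, lintegral_indicator hAm]
      have hgpA : (∫⁻ x in A, gp x ∂μ) ≠ ⊤ := by
        refine (lt_of_le_of_lt (le_trans (setLIntegral_le_lintegral _ _) ?_)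
          ENNReal.one_lt_top).ne
        rw [hgpl]
      have hsplit : ∫⁻ x in A, gq x ∂μ =
          J + ENNReal.ofReal (Real.exp ε) * ∫⁻ x in A, gp x ∂μ := by
        have hJA : J = ∫⁻ x in A, jf x ∂μ := by
          rw [hJint, ← lintegral_indicator hAm]
          refine lintegral_congr fun x => ?_
          by_cases hx : x ∈ A
          · rw [Set.indicator_of_mem hx]
          · rw [Set.indicator_of_notMem hx]
            exact ENNReal.ofReal_eq_zero.2 (sub_nonpos.2 (not_lt.1 hx))
        rw [hJA, ← lintegral_const_mul _ hgpm, ← lintegral_add_left hjfm]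
        refine (setLIntegral_congr_fun hAm (fun x hx => ?_)).symm
        have hba : Real.exp ε * ∏ i, p (x i) < ∏ i, q (x i) := hx
        rw [hjf, hgp, hgq, ← ENNReal.ofReal_mul (Real.exp_pos ε).le,
          ← ENNReal.ofReal_add (sub_nonneg.2 hba.le)
            (mul_nonneg (Real.exp_pos ε).le (Finset.prod_nonneg fun i _ => (hp0 _).le)),
          sub_add_cancel]
      rw [hsplit, ENNReal.toReal_add hJne (ENNReal.mul_ne_top ENNReal.ofReal_ne_top hgpA),
        ENNReal.toReal_mul, ENNReal.toReal_ofReal (Real.exp_pos ε).le]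
      ring
  -- now the sup/inf bookkeeping
  set Pn := Measure.pi fun _ : Fin n => P
  set Qn := Measure.pi fun _ : Fin n => Q
  set T : ℝ → ℝ := tradeOff Pn Qn with hT
  have hBlb : ∀ x ∈ Set.Icc (0:ℝ) 1, ∀ β ∈ {β | ∃ φ : (Fin n → ℝ) → ℝ, Measurable φ ∧
      (∀ y, φ y ∈ Set.Icc (0:ℝ) 1) ∧ (∫ y, φ y ∂Pn) ≤ x ∧ β = 1 - ∫ y, φ y ∂Qn},
      1 - J.toReal - Real.exp ε * x ≤ β := by
    rintro x hx β ⟨φ, hφm, h01, hφP, rfl⟩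
    have h1 := key1 φ hφm h01
    have h2 : Real.exp ε * ∫ y, φ y ∂Pn ≤ Real.exp ε * x :=
      mul_le_mul_of_nonneg_left hφP (Real.exp_pos ε).le
    linarith
  have hBne : ∀ x : ℝ, 0 ≤ x → (1:ℝ) ∈ {β | ∃ φ : (Fin n → ℝ) → ℝ, Measurable φ ∧
      (∀ y, φ y ∈ Set.Icc (0:ℝ) 1) ∧ (∫ y, φ y ∂Pn) ≤ x ∧ β = 1 - ∫ y, φ y ∂Qn} := by
    intro x hx
    exact ⟨fun _ => 0, measurable_const, fun y => by simp, by simp [hx], by simp⟩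
  have hTlb : ∀ x ∈ Set.Icc (0:ℝ) 1, 1 - J.toReal - Real.exp ε * x ≤ T x := by
    intro x hx
    exact le_csInf ⟨1, hBne x hx.1⟩ (hBlb x hx)
  set S := {z | ∃ x ∈ Set.Icc (0:ℝ) 1, z = (-Real.exp ε) * x - T x} with hS
  have hSub : ∀ z ∈ S, z ≤ J.toReal - 1 := by
    rintro z ⟨x, hx, rfl⟩
    have := hTlb x hx
    linarith
  have hSbdd : BddAbove S := ⟨J.toReal - 1, fun z hz => hSub z hz⟩
  have hSne : S.Nonempty := ⟨(-Real.exp ε) * 0 - T 0, 0, ⟨le_refl 0, zero_le_one⟩, rfl⟩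
  obtain ⟨φs, hφsm, hφs01, hφseq⟩ := key2
  have hφsInt : Integrable φs Pn :=
    (integrable_const (1:ℝ)).mono' hφsm.aestronglyMeasurable
      (ae_of_all _ fun x => by
        rw [Real.norm_eq_abs, abs_of_nonneg (hφs01 x).1]; exact (hφs01 x).2)
  set xs := ∫ y, φs y ∂Pn with hxs
  have hxs0 : 0 ≤ xs := integral_nonneg fun x => (hφs01 x).1
  have hxs1 : xs ≤ 1 := by
    calc xs ≤ ∫ _, (1:ℝ) ∂Pn := integral_mono hφsInt (integrable_const 1) fun x => (hφs01 x).2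
      _ = 1 := by simp
  have hTub : T xs ≤ 1 - ∫ y, φs y ∂Qn := by
    refine csInf_le ⟨1 - J.toReal - Real.exp ε * xs, fun β hβ =>
      hBlb xs ⟨hxs0, hxs1⟩ β hβ⟩ ⟨φs, hφsm, hφs01, le_refl _, rfl⟩
  have hlow : J.toReal - 1 ≤ sSup S := by
    refine le_trans ?_ (le_csSup hSbdd (⟨xs, ⟨hxs0, hxs1⟩, rfl⟩ : _ ∈ S))
    have := hφseq
    linarith
  have hsup : sSup S = J.toReal - 1 := le_antisymm (csSup_le hSne hSub) hlow
  show 1 + conj01 T (-Real.exp ε) = J.toReal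
  rw [conj01]
  have : {z | ∃ x ∈ Set.Icc (0:ℝ) 1, z = (-Real.exp ε) * x - T x} = S := rfl
  rw [this, hsup]
  ring

theorem delta_recursion
    (p q : ℝ → ℝ) (hpm : Measurable p) (hqm : Measurable q)
    (hp0 : ∀ x, 0 < p x) (hq0 : ∀ x, 0 < q x)
    (P Q : Measure ℝ) [IsProbabilityMeasure P] [IsProbabilityMeasure Q]
    (hP : P = volume.withDensity (fun x => ENNReal.ofReal (p x)))
    (hQ : Q = volume.withDensity (fun x => ENNReal.ofReal (q x)))
    (L : ℝ → ℝ) (hL : ∀ x, L x = Real.log (q x / p x)) :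
    (∀ ε : ℝ, dualDelta P Q 0 ε = max (1 - Real.exp ε) 0) ∧
    (∀ (k : ℕ) (ε : ℝ),
      dualDelta P Q (k + 1) ε = ∫ x, dualDelta P Q k (ε - L x) * q x) := by
  have hq1 : ∫⁻ t, ENNReal.ofReal (q t) = 1 := by
    have h := measure_univ (μ := Q)
    rwa [hQ, withDensity_apply _ MeasurableSet.univ, setLIntegral_univ] at h
  have hJne : ∀ (k : ℕ) (s : ℝ), Jfun p q k s ≠ ⊤ := fun k s =>
    (lt_of_le_of_lt (Jfun_le_one hqm (fun x => (hp0 x).le) (fun x => (hq0 x).le) hq1 k s)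
      ENNReal.one_lt_top).ne
  have hLm : Measurable L := by
    have h : L = fun x => Real.log (q x / p x) := funext hL
    rw [h]; exact Real.measurable_log.comp (hqm.div hpm)
  constructor
  · intro ε
    rw [dualDelta_eq_Jfun p q hpm hqm hp0 hq0 P Q hP hQ 0 ε, Jfun_zero,
      ENNReal.toReal_ofReal']
  · intro k ε
    rw [dualDelta_eq_Jfun p q hpm hqm hp0 hq0 P Q hP hQ (k+1) ε,
      Jfun_succ hpm hqm hp0 hq0 L hL k ε]
    have hfx : (fun x => dualDelta P Q k (ε - L x) * q x) =
        fun x => (Jfun p q k (ε - L x)).toReal * q x := by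
      funext x; rw [dualDelta_eq_Jfun p q hpm hqm hp0 hq0 P Q hP hQ k (ε - L x)]
    rw [hfx]
    have hmeas : Measurable fun x => (Jfun p q k (ε - L x)).toReal * q x :=
      ((ENNReal.measurable_toReal.comp ((Jfun_measurable hpm hqm k).comp
        (measurable_const.sub hLm))).mul hqm)
    rw [integral_eq_lintegral_of_nonneg_ae (ae_of_all _ fun x =>
        mul_nonneg ENNReal.toReal_nonneg (hq0 x).le) hmeas.aestronglyMeasurable]
    congr 1
    refine lintegral_congr fun x => ?_
    rw [ENNReal.ofReal_mul ENNReal.toReal_nonneg, ENNReal.ofReal_toReal (hJne k _), mul_comm]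
end
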